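/- arXiv:1702.06680 — 3 statements merged into one kernel-verified Lean document; each statement's English description precedes it below -/
import Mathlib

section
/- Let X = (R, p, f¹, …, f^N) with R ∈ SO(3) and p, fⁱ ∈ ℝ³. Then M_X is invertible with M_X^{-1} = fromBlocks(Rᵀ, −Rᵀ·[p f¹ ⋯ f^N]; 0, I_{N+1}), and for every e = (e_θ, e_p, e¹, …, e^N) ∈ (ℝ³)^{N+2} one has M_X · L_e · M_X^{-1} = L_{e'}, where e'_θ = R e_θ, e'_p = S(p)R e_θ + R e_p, and e'^i = S(fⁱ)R e_θ + R eⁱ for i = 1, …, N. That is, conjugation by M_X acts on the Lie algebra by the adjoint matrix ad_X whose (1,1) block is R, whose first block column is (R; S(p)R; S(f¹)R; …; S(f^N)R), whose other diagonal blocks all equal R, and whose remaining blocks are 0 (equation (22) of the paper). -/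
open Matrix

/-- `S y` is the skew-symmetric matrix with `S y *ᵥ x = y ×₃ x` (cross-product matrix). -/
def S (y : Fin 3 → ℝ) : Matrix (Fin 3) (Fin 3) ℝ :=
  !![0, -y 2, y 1; y 2, 0, -y 0; -y 1, y 0, 0]

lemma adj_S (A : Matrix (Fin 3) (Fin 3) ℝ) (y : Fin 3 → ℝ) :
    Aᵀ.adjugate * S y * A.adjugate = A.det • S (A *ᵥ y) := by
  ext i j
  fin_cases i <;> fin_cases j <;>
    simp [S, Matrix.mul_apply, Matrix.adjugate_fin_three, Matrix.mulVec, dotProduct,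
      Fin.sum_univ_three, Matrix.det_fin_three, Matrix.transpose_apply] <;> ring

lemma rot_S (R : Matrix (Fin 3) (Fin 3) ℝ) (hR : Rᵀ * R = 1 ∧ R.det = 1)
    (y : Fin 3 → ℝ) : R * S y * Rᵀ = S (R *ᵥ y) := by
  have h2 : R * Rᵀ = 1 := mul_eq_one_comm.mp hR.1
  have hadj : R.adjugate = Rᵀ := by
    calc R.adjugate = R.adjugate * (R * Rᵀ) := by rw [h2, mul_one]
      _ = (R.adjugate * R) * Rᵀ := by rw [mul_assoc]
      _ = Rᵀ := by rw [Matrix.adjugate_mul, hR.2]; simp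
  have hadjT : Rᵀ.adjugate = R := by
    rw [show Rᵀ.adjugate = R.adjugateᵀ from (Matrix.adjugate_transpose R).symm, hadj,
      Matrix.transpose_transpose]
  have := adj_S R y
  rwa [hadjT, hadj, hR.2, one_smul] at this

/-- For `X = (R, p, f¹, …, f^N)` with `R ∈ SO(3)` (the columns of `V` being `p, f¹, …, f^N`),
the embedding `M_X = fromBlocks R V 0 I` is invertible with inverse
`fromBlocks Rᵀ (−Rᵀ·V) 0 I`, and conjugation by `M_X` acts on the Lie algebra elements
`L_e = fromBlocks (S e_θ) E 0 0` by the adjoint: `M_X · L_e · M_X⁻¹ = L_{e'}` where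
`e'_θ = R e_θ` and the `j`-th column of `E'` is `S(V_j)·(R e_θ) + R·E_j`
(equation (22) of the paper). -/
theorem MX_inv_and_adjoint (N : ℕ) (R : Matrix (Fin 3) (Fin 3) ℝ)
    (hR : Rᵀ * R = 1 ∧ R.det = 1)
    (V : Matrix (Fin 3) (Fin (N + 1)) ℝ)
    (eθ : Fin 3 → ℝ) (E : Matrix (Fin 3) (Fin (N + 1)) ℝ) :
    Matrix.fromBlocks R V 0 (1 : Matrix (Fin (N + 1)) (Fin (N + 1)) ℝ)
        * Matrix.fromBlocks Rᵀ (-(Rᵀ * V)) 0 1 = 1 ∧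
    Matrix.fromBlocks Rᵀ (-(Rᵀ * V)) 0 (1 : Matrix (Fin (N + 1)) (Fin (N + 1)) ℝ)
        * Matrix.fromBlocks R V 0 1 = 1 ∧
    (Matrix.fromBlocks R V 0 (1 : Matrix (Fin (N + 1)) (Fin (N + 1)) ℝ))⁻¹
        = Matrix.fromBlocks Rᵀ (-(Rᵀ * V)) 0 1 ∧
    Matrix.fromBlocks R V 0 (1 : Matrix (Fin (N + 1)) (Fin (N + 1)) ℝ)
        * Matrix.fromBlocks (S eθ) E 0 0
        * Matrix.fromBlocks Rᵀ (-(Rᵀ * V)) 0 1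
      = Matrix.fromBlocks (S (R *ᵥ eθ))
          (Matrix.of fun i j => (S (fun r => V r j) *ᵥ (R *ᵥ eθ) + R *ᵥ fun r => E r j) i)
          0 0 := by
  have h2 : R * Rᵀ = 1 := mul_eq_one_comm.mp hR.1
  have hmul1 : Matrix.fromBlocks R V 0 (1 : Matrix (Fin (N + 1)) (Fin (N + 1)) ℝ)
      * Matrix.fromBlocks Rᵀ (-(Rᵀ * V)) 0 1 = 1 := by
    rw [Matrix.fromBlocks_multiply, ← Matrix.fromBlocks_one]
    congr 1 <;> simp [h2, Matrix.mul_assoc, ← Matrix.mul_assoc, Matrix.mul_neg]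
  have hmul2 : Matrix.fromBlocks Rᵀ (-(Rᵀ * V)) 0 (1 : Matrix (Fin (N + 1)) (Fin (N + 1)) ℝ)
      * Matrix.fromBlocks R V 0 1 = 1 := by
    rw [Matrix.fromBlocks_multiply, ← Matrix.fromBlocks_one]
    congr 1 <;> simp [hR.1]
  refine ⟨hmul1, hmul2, Matrix.inv_eq_right_inv hmul1, ?_⟩
  have hrot : R * S eθ * Rᵀ = S (R *ᵥ eθ) := rot_S R hR eθ
  have hTR : -(S (R *ᵥ eθ) * V) + R * E
      = (Matrix.of fun i j => (S (fun r => V r j) *ᵥ (R *ᵥ eθ) + R *ᵥ fun r => E r j) i) := by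
    ext i j
    fin_cases i <;>
      simp [Matrix.mul_apply, Matrix.mulVec, Matrix.vecMul, dotProduct, S, Fin.sum_univ_three,
        Matrix.neg_apply, Matrix.add_apply] <;> ring
  rw [Matrix.fromBlocks_multiply, Matrix.fromBlocks_multiply]
  simp only [Matrix.mul_zero, Matrix.zero_mul, add_zero, zero_add, Matrix.mul_one,
    Matrix.mul_neg, ← Matrix.mul_assoc, hrot, hTR, neg_zero]
end

section
/- For X₁ = (R₁, p₁, f₁¹, …, f₁^N) and X₂ = (R₂, p₂, f₂¹, …, f₂^N) with R₁, R₂ ∈ SO(3), the adjoint matrix is multiplicative on the group: ad_{X₁·X₂} = ad_{X₁} · ad_{X₂}, where X₁·X₂ = (R₁R₂, R₁p₂ + p₁, R₁f₂¹ + f₁¹, …, R₁f₂^N + f₁^N). -/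
open Matrix

/-- The adjoint matrix `ad_X` of `X = (R, p, f¹, …, f^N)` (equation (22) of the paper),
where the columns of `V` are `p, f¹, …, f^N`.  Block rows/columns are indexed by
`Unit ⊕ Fin (N+1)`: the `Unit` block is the rotation block; the (1,1) block is `R`, the
first block column is `(R; S(p)R; S(f¹)R; …; S(f^N)R)`, the other diagonal blocks are `R`,
and all remaining blocks vanish. -/
def adM (N : ℕ) (R : Matrix (Fin 3) (Fin 3) ℝ) (V : Matrix (Fin 3) (Fin (N + 1)) ℝ) :
    Matrix ((Unit ⊕ Fin (N + 1)) × Fin 3) ((Unit ⊕ Fin (N + 1)) × Fin 3) ℝ :=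
  fun p q =>
    match p.1, q.1 with
    | Sum.inl _, Sum.inl _ => R p.2 q.2
    | Sum.inr i, Sum.inl _ => (S (fun r => V r i) * R) p.2 q.2
    | Sum.inl _, Sum.inr _ => 0
    | Sum.inr i, Sum.inr j => if i = j then R p.2 q.2 else 0


lemma S_key (R : Matrix (Fin 3) (Fin 3) ℝ) (h1 : Rᵀ * R = 1) (h2 : R.det = 1)
    (v : Fin 3 → ℝ) : S (R *ᵥ v) * R = R * S v := by
  have hinv : R⁻¹ = Rᵀ := inv_eq_left_inv h1
  have hadj : adjugate R = Rᵀ := by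
    rw [← hinv, Matrix.inv_def, h2]; simp
  rw [adjugate_fin_three] at hadj
  have h := fun i j => congrFun (congrFun hadj i) j
  have h00 := h 0 0; have h01 := h 0 1; have h02 := h 0 2
  have h10 := h 1 0; have h11 := h 1 1; have h12 := h 1 2
  have h20 := h 2 0; have h21 := h 2 1; have h22 := h 2 2
  simp only [Matrix.cons_val', Matrix.cons_val_zero, Matrix.cons_val_one, Matrix.head_cons,
    Matrix.head_fin_const, Matrix.empty_val', Matrix.cons_val_fin_one, Matrix.of_apply,
    Matrix.transpose_apply, Matrix.cons_val_two, Matrix.tail_cons] at h00 h01 h02 h10 h11 h12 h20 h21 h22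
  ext i j
  fin_cases i <;> fin_cases j <;>
    simp [S, Matrix.mul_apply, Matrix.mulVec, Fin.sum_univ_three, dotProduct]
  · linear_combination v 2 * h10 - v 1 * h20
  · linear_combination v 0 * h20 - v 2 * h00
  · linear_combination v 1 * h00 - v 0 * h10
  · linear_combination v 2 * h11 - v 1 * h21
  · linear_combination v 0 * h21 - v 2 * h01
  · linear_combination v 1 * h01 - v 0 * h11
  · linear_combination v 2 * h12 - v 1 * h22
  · linear_combination v 0 * h22 - v 2 * h02
  · linear_combination v 1 * h02 - v 0 * h12

lemma S_add (a b : Fin 3 → ℝ) : S (a + b) = S a + S b := by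
  ext i j; fin_cases i <;> fin_cases j <;> simp [S] <;> ring

lemma S_block (R₁ R₂ : Matrix (Fin 3) (Fin 3) ℝ) (h1 : R₁ᵀ * R₁ = 1) (h2 : R₁.det = 1)
    (v₁ v₂ : Fin 3 → ℝ) :
    S (R₁ *ᵥ v₂ + v₁) * (R₁ * R₂) = S v₁ * R₁ * R₂ + R₁ * (S v₂ * R₂) := by
  rw [S_add, add_mul, ← Matrix.mul_assoc, S_key R₁ h1 h2 v₂, Matrix.mul_assoc,
    ← Matrix.mul_assoc, add_comm, ← Matrix.mul_assoc]

/-- The adjoint is multiplicative on the group `G(N)`: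
`ad_{X₁·X₂} = ad_{X₁}·ad_{X₂}`, where `X₁·X₂ = (R₁R₂, R₁p₂ + p₁, …, R₁f₂^N + f₁^N)`,
i.e. the column matrix of the product is `R₁·V₂ + V₁`. -/
theorem adM_mul (N : ℕ) (R₁ R₂ : Matrix (Fin 3) (Fin 3) ℝ)
    (hR₁ : R₁ᵀ * R₁ = 1 ∧ R₁.det = 1) (hR₂ : R₂ᵀ * R₂ = 1 ∧ R₂.det = 1)
    (V₁ V₂ : Matrix (Fin 3) (Fin (N + 1)) ℝ) :
    adM N (R₁ * R₂) (R₁ * V₂ + V₁) = adM N R₁ V₁ * adM N R₂ V₂ := by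
  obtain ⟨h1, h2⟩ := hR₁
  ext ⟨s, i⟩ ⟨t, j⟩
  rw [Matrix.mul_apply]
  rw [Fintype.sum_prod_type]
  rw [Fintype.sum_sum_type]
  cases s with
  | inl u =>
    cases t with
    | inl w => simp [adM, Matrix.mul_apply]
    | inr m => simp [adM]
  | inr m =>
    cases t with
    | inl w =>
      have hb := congrFun (congrFun (S_block R₁ R₂ h1 h2 (fun r => V₁ r m) (fun r => V₂ r m)) i) j
      simp only [adM]
      simp [Matrix.mul_apply, Finset.mul_sum, Finset.sum_ite_eq]
      have hv : ((R₁ *ᵥ fun r => V₂ r m) + fun r => V₁ r m) = fun r => ∑ j, R₁ r j * V₂ j m + V₁ r m := by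
        funext r; simp [Matrix.mulVec, dotProduct]
      rw [hv] at hb
      simpa [Matrix.mul_apply, Matrix.mulVec, dotProduct, Finset.sum_mul, Finset.mul_sum] using hb
    | inr m' =>
      simp [adM, Matrix.mul_apply]
end

section
/- Consider SLAM states X = (R, p, f¹, …, f^N) with R ∈ SO(3) and p, fⁱ ∈ ℝ³, the motion model f(X, (w, v), (ε_w, ε_v)) = (R·exp(S(w + ε_w)), p + R·(v + ε_v), f¹, …, f^N), and the observations hⁱ(X) = Rᵀ·(fⁱ − p). For R̄ ∈ SO(3) and T̄ ∈ ℝ³, define the deterministic rigid body transformation T(X) = (R̄R, R̄p + T̄, R̄f¹ + T̄, …, R̄f^N + T̄). Then for all X, w, v, ε_w, ε_v: f(T(X), (w, v), (ε_w, ε_v)) = T(f(X, (w, v), (ε_w, ε_v))) and hⁱ(T(X)) = hⁱ(X) for every i. Consequently, if (X_n) and (Y_n) are trajectories generated recursively by the motion model with the same inputs and noises from initial states X₀ and Y₀ = T(X₀), then Y_n = T(X_n) and hⁱ(Y_n) = hⁱ(X_n) for all n ≥ 0, i.e., the SLAM system output is invariant under rigid body transformations. -/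
open Matrix

/-- A SLAM state `(R, p, f¹, …, f^N)`. -/
abbrev SlamState (N : ℕ) := Matrix (Fin 3) (Fin 3) ℝ × (Fin 3 → ℝ) × (Fin N → (Fin 3 → ℝ))

/-- The SLAM motion model
`f(X, (w, v), (ε_w, ε_v)) = (R·exp(S(w+ε_w)), p + R·(v+ε_v), f¹, …, f^N)`. -/
noncomputable def motion (N : ℕ) (X : SlamState N) (w v εw εv : Fin 3 → ℝ) : SlamState N :=
  (X.1 * NormedSpace.exp (S (w + εw)), X.2.1 + X.1 *ᵥ (v + εv), X.2.2)

/-- The (noise-free) observation of landmark `i`: `hⁱ(X) = Rᵀ·(fⁱ − p)`. -/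
def obs (N : ℕ) (i : Fin N) (X : SlamState N) : Fin 3 → ℝ :=
  X.1ᵀ *ᵥ (X.2.2 i - X.2.1)

/-- The deterministic rigid body transformation
`T(X) = (R̄R, R̄p + T̄, R̄f¹ + T̄, …, R̄f^N + T̄)`. -/
def rigid (N : ℕ) (Rb : Matrix (Fin 3) (Fin 3) ℝ) (Tb : Fin 3 → ℝ) (X : SlamState N) :
    SlamState N :=
  (Rb * X.1, Rb *ᵥ X.2.1 + Tb, fun i => Rb *ᵥ X.2.2 i + Tb)

lemma motion_rigid_aux (N : ℕ) (Rb : Matrix (Fin 3) (Fin 3) ℝ) (Tb : Fin 3 → ℝ)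
    (X : SlamState N) (w v εw εv : Fin 3 → ℝ) :
    motion N (rigid N Rb Tb X) w v εw εv = rigid N Rb Tb (motion N X w v εw εv) := by
  simp only [motion, rigid, Prod.mk.injEq]
  refine ⟨Matrix.mul_assoc _ _ _, ?_, trivial⟩
  simp [Matrix.mulVec_add, Matrix.mulVec_mulVec]
  abel

lemma obs_rigid_aux (N : ℕ) (Rb : Matrix (Fin 3) (Fin 3) ℝ) (Tb : Fin 3 → ℝ)
    (hRb : Rbᵀ * Rb = 1) (X : SlamState N) (i : Fin N) :
    obs N i (rigid N Rb Tb X) = obs N i X := by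
  simp only [obs, rigid, add_sub_add_right_eq_sub, Matrix.transpose_mul,
    ← Matrix.mulVec_sub, Matrix.mulVec_mulVec]
  rw [Matrix.mul_assoc, hRb, Matrix.mul_one]

/-- The SLAM system output is invariant under deterministic rigid body transformations:
the motion model is equivariant, the observations are invariant, and consequently
trajectories started from `X₀` and `T(X₀)` with the same inputs and noises stay related by
`T` and produce identical observations. -/
theorem slam_output_invariant_rigid (N : ℕ)
    (Rb : Matrix (Fin 3) (Fin 3) ℝ) (Tb : Fin 3 → ℝ)
    (hRb : Rbᵀ * Rb = 1 ∧ Rb.det = 1) :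
    (∀ X : SlamState N, X.1ᵀ * X.1 = 1 ∧ X.1.det = 1 →
      ∀ w v εw εv : Fin 3 → ℝ,
        motion N (rigid N Rb Tb X) w v εw εv = rigid N Rb Tb (motion N X w v εw εv) ∧
        ∀ i, obs N i (rigid N Rb Tb X) = obs N i X) ∧
    (∀ (X Y : ℕ → SlamState N) (w v εw εv : ℕ → Fin 3 → ℝ),
      ((X 0).1ᵀ * (X 0).1 = 1 ∧ (X 0).1.det = 1) →
      (∀ n, X (n + 1) = motion N (X n) (w n) (v n) (εw n) (εv n)) →
      (∀ n, Y (n + 1) = motion N (Y n) (w n) (v n) (εw n) (εv n)) →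
      Y 0 = rigid N Rb Tb (X 0) →
      ∀ n, Y n = rigid N Rb Tb (X n) ∧ ∀ i, obs N i (Y n) = obs N i (X n)) := by
  obtain ⟨hRo, -⟩ := hRb
  refine ⟨fun X _ w v εw εv => ⟨motion_rigid_aux N Rb Tb X w v εw εv,
    fun i => obs_rigid_aux N Rb Tb hRo X i⟩, ?_⟩
  intro X Y w v εw εv _ hX hY h0 n
  have key : ∀ n, Y n = rigid N Rb Tb (X n) := by
    intro n
    induction n with
    | zero => exact h0
    | succ n ih => rw [hY n, hX n, ih, motion_rigid_aux]
  exact ⟨key n, fun i => by rw [key n, obs_rigid_aux N Rb Tb hRo]⟩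
end
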